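/- Let X ⊂ ℙ^N be a smooth closed subvariety of dimension ≥ 1 and degree ≥ 2. Then there is no point p ∈ ℙ^N such that the embedded projective tangent space to X at x contains p for every x ∈ X. -/

import Mathlib

open MvPolynomial

/-- Points of complex affine n-space. -/
abbrev CPt (n : ℕ) : Type := Fin n → ℂ

/-- The common zero locus of a set of polynomials. -/
def zeroLocus {n : ℕ} (S : Set (MvPolynomial (Fin n) ℂ)) : Set (CPt n) :=
  {x | ∀ f ∈ S, eval x f = 0}

/-- A (Zariski-)closed algebraic subset of ℂ^n. -/
def IsAlgebraicSet {n : ℕ} (C : Set (CPt n)) : Prop := ∃ S, C = zeroLocus S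

/-- The Zariski tangent space of C at x: the common kernel of the differentials at x of
all polynomials vanishing on C. -/
noncomputable def zTangent {n : ℕ} (C : Set (CPt n)) (x : CPt n) : Submodule ℂ (CPt n) :=
  sInf {K | ∃ f : MvPolynomial (Fin n) ℂ, (∀ y ∈ C, eval y f = 0) ∧
    K = LinearMap.ker (fderiv ℂ (fun y => eval y f) x).toLinearMap}

/-- An irreducible algebraic subset of ℂ^n. -/
def IsIrreducibleAlgebraicSet {n : ℕ} (C : Set (CPt n)) : Prop :=
  IsAlgebraicSet C ∧ C.Nonempty ∧
    ∀ C₁ C₂ : Set (CPt n), IsAlgebraicSet C₁ → IsAlgebraicSet C₂ →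
      C ⊆ C₁ ∪ C₂ → C ⊆ C₁ ∨ C ⊆ C₂

/-- C is a cone: stable under all scalar multiplications. -/
def IsCone {n : ℕ} (C : Set (CPt n)) : Prop := ∀ c : ℂ, ∀ x ∈ C, c • x ∈ C

/- STATEMENT 5: Let X ⊂ ℙ^N be a smooth closed subvariety of dimension ≥ 1 and degree ≥ 2.
Then there is no point p ∈ ℙ^N such that the embedded projective tangent space ℙT_x(X)
contains p for every x ∈ X.
We formalize X through its affine cone C ⊂ ℂ^{N+1}: C is an irreducible algebraic cone,
smooth away from the vertex with (Zariski) tangent spaces of constant dimension d = dim X + 1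
(for an irreducible variety, constancy of the tangent dimension is equivalent to smoothness);
dim X ≥ 1 means d ≥ 2; degree ≥ 2 means (for irreducible X) that C is not a linear subspace;
ℙT_x(X) is the projectivization of the tangent space of the cone, so "p ∈ ℙT_x(X) for all x"
means a nonzero vector p lying in every tangent space zTangent C x, x ∈ C \ {0}. -/
noncomputable def Dq {n : ℕ} (q : CPt n) (f : MvPolynomial (Fin n) ℂ) : MvPolynomial (Fin n) ℂ :=
  ∑ i, MvPolynomial.C (q i) * pderiv i f


lemma Dq_add {n : ℕ} (q : CPt n) (f g : MvPolynomial (Fin n) ℂ) :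
    Dq q (f + g) = Dq q f + Dq q g := by
  simp [Dq, map_add, mul_add, Finset.sum_add_distrib]

lemma Dq_C {n : ℕ} (q : CPt n) (a : ℂ) : Dq q (C a) = 0 := by
  simp [Dq]

lemma Dq_X {n : ℕ} (q : CPt n) (i : Fin n) : Dq q (X i) = C (q i) := by
  classical
  simp [Dq, pderiv_X, Pi.single_apply]

lemma Dq_mul {n : ℕ} (q : CPt n) (f g : MvPolynomial (Fin n) ℂ) :
    Dq q (f * g) = Dq q f * g + f * Dq q g := by
  simp only [Dq, pderiv_mul, mul_add, Finset.sum_add_distrib, Finset.sum_mul, Finset.mul_sum]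
  congr 1
  · exact Finset.sum_congr rfl fun i _ => by ring
  · exact Finset.sum_congr rfl fun i _ => by ring

noncomputable def Lmap {n : ℕ} (f : MvPolynomial (Fin n) ℂ) (x : CPt n) : CPt n →L[ℂ] ℂ :=
  ∑ i, eval x (pderiv i f) • (ContinuousLinearMap.proj (R := ℂ) (φ := fun _ : Fin n => ℂ) i)

lemma Lmap_apply {n : ℕ} (f : MvPolynomial (Fin n) ℂ) (x v : CPt n) :
    Lmap f x v = ∑ i, eval x (pderiv i f) * v i := by
  simp [Lmap]

lemma hasFDerivAt_eval {n : ℕ} (f : MvPolynomial (Fin n) ℂ) (x : CPt n) :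
    HasFDerivAt (fun y : CPt n => eval y f) (Lmap f x) x := by
  induction f using MvPolynomial.induction_on with
  | C a =>
      have : Lmap (C a : MvPolynomial (Fin n) ℂ) x = 0 := by
        ext v; simp [Lmap_apply]
      have hfun : (fun y : CPt n => eval y (C a : MvPolynomial (Fin n) ℂ)) = fun _ => a :=
        funext fun y => by simp
      rw [this, hfun]
      exact hasFDerivAt_const (𝕜 := ℂ) a x
  | add f g hf hg =>
      have h := hf.add hg
      have : Lmap (f + g) x = Lmap f x + Lmap g x := by
        ext v; simp [Lmap_apply, add_mul, Finset.sum_add_distrib]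
      have hfun : (fun y : CPt n => eval y (f + g)) = fun y : CPt n => eval y f + eval y g :=
        funext fun y => by simp
      rw [this, hfun]
      exact h
  | mul_X f i hf =>
      have hproj : HasFDerivAt (fun y : CPt n => y i)
          (ContinuousLinearMap.proj (R := ℂ) (φ := fun _ : Fin n => ℂ) i) x :=
        (ContinuousLinearMap.proj (R := ℂ) (φ := fun _ : Fin n => ℂ) i).hasFDerivAt
      have h := hf.mul hproj
      have heq : Lmap (f * X i) x
          = eval x f • ContinuousLinearMap.proj (R := ℂ) (φ := fun _ : Fin n => ℂ) i
            + x i • Lmap f x := by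
        classical
        ext v
        have hev : ∀ j : Fin n, eval x (if i = j then (1 : MvPolynomial (Fin n) ℂ) else 0)
            = if i = j then 1 else 0 := fun j => by split <;> simp
        simp only [Lmap_apply, ContinuousLinearMap.add_apply, ContinuousLinearMap.coe_smul',
          Pi.smul_apply, ContinuousLinearMap.proj_apply, smul_eq_mul, pderiv_mul, pderiv_X,
          map_add, map_mul, eval_X, Pi.single_apply, hev, add_mul, Finset.sum_add_distrib,
          apply_ite (eval x), map_one, map_zero, mul_ite, ite_mul, mul_one, one_mul, mul_zero, zero_mul, Finset.sum_ite_eq,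
          Finset.mem_univ, if_true, Lmap_apply, Finset.mul_sum]
        rw [add_comm]
        congr 1
        exact Finset.sum_congr rfl fun j _ => by ring
      rw [heq]
      have hfun : (fun y : CPt n => eval y (f * X i)) = fun y : CPt n => eval y f * y i :=
        funext fun y => by simp
      rw [hfun]
      exact h

lemma fderiv_eval_apply {n : ℕ} (f : MvPolynomial (Fin n) ℂ) (x q : CPt n) :
    fderiv ℂ (fun y : CPt n => eval y f) x q = eval x (Dq q f) := by
  rw [(hasFDerivAt_eval f x).fderiv, Lmap_apply]
  simp [Dq, mul_comm]

noncomputable def Phi {n : ℕ} (x q : CPt n) :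
    MvPolynomial (Fin n) ℂ →ₐ[ℂ] Polynomial ℂ :=
  aeval (fun i => Polynomial.C (x i) + Polynomial.C (q i) * Polynomial.X)

lemma Phi_eval {n : ℕ} (x q : CPt n) (f : MvPolynomial (Fin n) ℂ) (t : ℂ) :
    (Phi x q f).eval t = eval (x + t • q) f := by
  induction f using MvPolynomial.induction_on with
  | C a => simp [Phi]
  | add f g hf hg => simp [map_add, hf, hg]
  | mul_X f i hf =>
      rw [map_mul, Polynomial.eval_mul, hf]
      simp only [Phi, aeval_X, Polynomial.eval_add, Polynomial.eval_mul, Polynomial.eval_C,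
        Polynomial.eval_X, map_mul, eval_X, Pi.add_apply, Pi.smul_apply, smul_eq_mul]
      ring

lemma derivative_Phi {n : ℕ} (x q : CPt n) (f : MvPolynomial (Fin n) ℂ) :
    (Phi x q f).derivative = Phi x q (Dq q f) := by
  induction f using MvPolynomial.induction_on with
  | C a => simp [Phi, Dq]
  | add f g hf hg => simp [map_add, Dq_add, hf, hg]
  | mul_X f i hf =>
      have hX : (Phi x q) (X i) = Polynomial.C (x i) + Polynomial.C (q i) * Polynomial.X := by
        simp [Phi]
      have hC : (Phi x q) (C (q i) : MvPolynomial (Fin n) ℂ) = Polynomial.C (q i) := by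
        simp [Phi]
      have h2 : (Phi x q) (Dq q (f * X i))
          = (Phi x q) (Dq q f) * (Polynomial.C (x i) + Polynomial.C (q i) * Polynomial.X)
            + (Phi x q) f * Polynomial.C (q i) := by
        rw [Dq_mul, Dq_X, map_add, map_mul, map_mul, hX, hC]
      rw [map_mul, hX, Polynomial.derivative_mul, hf, h2]
      simp

/-- If the vanishing ideal of `S` is closed under the directional derivative `Dq q`,
then `Phi x q f` is the zero polynomial for every `f` vanishing on `S` and `x ∈ S`. -/
lemma Phi_eq_zero_of_closed {n : ℕ} {Cs : Set (CPt n)} {q : CPt n}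
    (H : ∀ f : MvPolynomial (Fin n) ℂ, (∀ y ∈ Cs, eval y f = 0) →
      ∀ y ∈ Cs, eval y (Dq q f) = 0)
    {x : CPt n} (hx : x ∈ Cs) :
    ∀ (m : ℕ) (f : MvPolynomial (Fin n) ℂ), (∀ y ∈ Cs, eval y f = 0) →
      (Phi x q f).natDegree ≤ m → Phi x q f = 0 := by
  intro m
  induction m with
  | zero =>
      intro f hf hdeg
      have hc := Polynomial.eq_C_of_natDegree_le_zero hdeg
      have h0 : (Phi x q f).coeff 0 = 0 := by
        have := Phi_eval x q f 0
        simp only [zero_smul, add_zero] at this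
        rw [hf x hx] at this
        rw [Polynomial.coeff_zero_eq_eval_zero]; exact this
      rw [hc, h0, map_zero]
  | succ m ih =>
      intro f hf hdeg
      have hD : Phi x q (Dq q f) = 0 := by
        refine ih (Dq q f) (H f hf) ?_
        rw [← derivative_Phi]
        exact le_trans (Polynomial.natDegree_derivative_le _) (by omega)
      have hder : (Phi x q f).derivative = 0 := by rw [derivative_Phi]; exact hD
      have hc := Polynomial.eq_C_of_derivative_eq_zero hder
      have h0 : (Phi x q f).coeff 0 = 0 := by
        have := Phi_eval x q f 0
        simp only [zero_smul, add_zero] at this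
        rw [hf x hx] at this
        rw [Polynomial.coeff_zero_eq_eval_zero]; exact this
      rw [hc, h0, map_zero]

/-- Main translation lemma: if the ideal of `Cs` is closed under `Dq q`, then `Cs` is
invariant under translations along `q`. -/
lemma translate_mem {n : ℕ} {Cs : Set (CPt n)} {S : Set (MvPolynomial (Fin n) ℂ)}
    (hCS : Cs = zeroLocus S) {q : CPt n}
    (H : ∀ f : MvPolynomial (Fin n) ℂ, (∀ y ∈ Cs, eval y f = 0) →
      ∀ y ∈ Cs, eval y (Dq q f) = 0)
    {x : CPt n} (hx : x ∈ Cs) (t : ℂ) : x + t • q ∈ Cs := by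
  rw [hCS]
  intro f hfS
  have hf : ∀ y ∈ Cs, eval y f = 0 := fun y hy => by
    rw [hCS] at hy; exact hy f hfS
  have hz := Phi_eq_zero_of_closed H hx (Phi x q f).natDegree f hf le_rfl
  have := congrArg (Polynomial.eval t) hz
  rwa [Phi_eval, Polynomial.eval_zero] at this

/-- Tangent membership from vanishing of the directional derivative along a line in `Cs`. -/
lemma mem_zTangent_of_line {n : ℕ} {Cs : Set (CPt n)} {x w : CPt n}
    (h : ∀ t : ℂ, x + t • w ∈ Cs) : w ∈ zTangent Cs x := by
  rw [zTangent, Submodule.mem_sInf]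
  rintro K ⟨f, hf, rfl⟩
  rw [LinearMap.mem_ker, ContinuousLinearMap.coe_coe, fderiv_eval_apply]
  have h0 : Phi x w f = 0 := by
    apply Polynomial.funext
    intro t
    rw [Phi_eval, Polynomial.eval_zero]
    exact hf _ (h t)
  have hD : Phi x w (Dq w f) = 0 := by rw [← derivative_Phi, h0, Polynomial.derivative_zero]
  have := congrArg (Polynomial.eval 0) hD
  rw [Phi_eval] at this
  simpa using this

lemma eval_Dq_eq_zero_of_mem {n : ℕ} {Cs : Set (CPt n)} {x q : CPt n}
    {f : MvPolynomial (Fin n) ℂ} (hf : ∀ y ∈ Cs, eval y f = 0)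
    (hq : q ∈ zTangent Cs x) : eval x (Dq q f) = 0 := by
  rw [zTangent, Submodule.mem_sInf] at hq
  have := hq (LinearMap.ker (fderiv ℂ (fun y => eval y f) x).toLinearMap) ⟨f, hf, rfl⟩
  rw [LinearMap.mem_ker, ContinuousLinearMap.coe_coe, fderiv_eval_apply] at this
  exact this

/-- Extend vanishing on `Cs \ {0}` to all of `Cs`, using a nonzero point of the cone. -/
lemma vanish_at_zero {n : ℕ} {Cs : Set (CPt n)} (hcone : IsCone Cs)
    {x₀ : CPt n} (hx₀ : x₀ ∈ Cs) (hx₀0 : x₀ ≠ 0)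
    {g : MvPolynomial (Fin n) ℂ} (hg : ∀ y ∈ Cs, y ≠ 0 → eval y g = 0) :
    ∀ y ∈ Cs, eval y g = 0 := by
  intro y hy
  by_cases hy0 : y = 0
  · subst hy0
    have hline : Phi (0 : CPt n) x₀ g = 0 := by
      refine Polynomial.eq_zero_of_infinite_isRoot _ ?_
      apply Set.Infinite.mono (s := {t : ℂ | t ≠ 0})
      · intro t ht
        have hmem : t • x₀ ∈ Cs := hcone t x₀ hx₀
        have hne : t • x₀ ≠ 0 := smul_ne_zero ht hx₀0
        have := hg _ hmem hne
        simp only [Set.mem_setOf_eq, Polynomial.IsRoot, Phi_eval, zero_add]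
        exact this
      · exact Set.infinite_of_finite_compl (by simp)
    have := congrArg (Polynomial.eval 0) hline
    rw [Phi_eval] at this
    simpa using this
  · exact hg y hy hy0

/-- The polynomial realizing a linear functional. -/
noncomputable def linPoly {n : ℕ} (l : Module.Dual ℂ (CPt n)) : MvPolynomial (Fin n) ℂ :=
  ∑ i, MvPolynomial.C (l (fun j => if i = j then 1 else 0)) * X i

lemma eval_linPoly {n : ℕ} (l : Module.Dual ℂ (CPt n)) (y : CPt n) :
    eval y (linPoly l) = l y := by
  rw [LinearMap.pi_apply_eq_sum_univ l y, linPoly]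
  simp [mul_comm]

lemma eval_Dq_linPoly {n : ℕ} (l : Module.Dual ℂ (CPt n)) (x q : CPt n) :
    eval x (Dq q (linPoly l)) = l q := by
  classical
  have hp : ∀ i : Fin n, pderiv i (linPoly l)
      = MvPolynomial.C (l (fun j => if i = j then (1:ℂ) else 0)) := by
    intro i
    rw [linPoly, map_sum, Finset.sum_eq_single i]
    · simp
    · intro k _ hk
      simp [pderiv_X, Pi.single_apply, hk]
    · simp
  rw [Dq, map_sum]
  simp only [map_mul, eval_C, hp]
  rw [LinearMap.pi_apply_eq_sum_univ l q]
  simp [mul_comm]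

theorem stmt5 (N : ℕ) (C : Set (CPt (N + 1)))
    (hirr : IsIrreducibleAlgebraicSet C) (hcone : IsCone C)
    (d : ℕ) (hd : 2 ≤ d)
    (hsmooth : ∀ x ∈ C, x ≠ 0 → Module.finrank ℂ (zTangent C x) = d)
    (hdeg : ¬ ∃ W : Submodule ℂ (CPt (N + 1)), C = (W : Set (CPt (N + 1)))) :
    ¬ ∃ p : CPt (N + 1), p ≠ 0 ∧ ∀ x ∈ C, x ≠ 0 → p ∈ zTangent C x := by
  rintro ⟨p, hp0, hptan⟩
  obtain ⟨⟨S, hCS⟩, ⟨x₁, hx₁⟩, -⟩ := hirr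
  have h0C : (0 : CPt (N + 1)) ∈ C := by
    simpa using hcone 0 x₁ hx₁
  -- C has a nonzero point (else C = ⊥, contradicting hdeg)
  obtain ⟨x₀, hx₀C, hx₀0⟩ : ∃ x₀ ∈ C, x₀ ≠ (0 : CPt (N + 1)) := by
    by_contra h
    push_neg at h
    refine hdeg ⟨⊥, ?_⟩
    ext y
    simp only [Submodule.bot_coe, Set.mem_singleton_iff]
    exact ⟨fun hy => h y hy, fun hy => hy ▸ h0C⟩
  -- the ideal of C is closed under the directional derivative along p
  have Hp : ∀ f : MvPolynomial (Fin (N + 1)) ℂ, (∀ y ∈ C, eval y f = 0) →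
      ∀ y ∈ C, eval y (Dq p f) = 0 := by
    intro f hf
    refine vanish_at_zero hcone hx₀C hx₀0 ?_
    intro y hy hy0
    exact eval_Dq_eq_zero_of_mem hf (hptan y hy hy0)
  have htrans : ∀ x ∈ C, ∀ t : ℂ, x + t • p ∈ C := fun x hx t =>
    translate_mem hCS Hp hx t
  have hpC : p ∈ C := by
    simpa using htrans 0 h0C 1
  set T := zTangent C p with hT
  -- C ⊆ T
  have hCT : ∀ x ∈ C, x ∈ T := by
    intro x hx
    refine mem_zTangent_of_line fun t => ?_
    have h1 : t • x ∈ C := hcone t x hx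
    have h2 := htrans (t • x) h1 1
    rw [one_smul] at h2
    have : p + t • x = t • x + p := add_comm _ _
    rw [this]
    exact h2
  -- tangent spaces are contained in T
  have hsub : ∀ x ∈ C, zTangent C x ≤ T := by
    intro x hx v hv
    by_contra hvT
    obtain ⟨l, hlv, hlT⟩ := Submodule.exists_dual_map_eq_bot_of_notMem hvT inferInstance
    have hTzero : ∀ y, y ∈ T → l y = 0 := by
      intro y hy
      have : l y ∈ T.map l := Submodule.mem_map_of_mem hy
      rwa [hlT, Submodule.mem_bot] at this
    have hfl : ∀ y ∈ C, eval y (linPoly l) = 0 := fun y hy => by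
      rw [eval_linPoly]; exact hTzero y (hCT y hy)
    have hres := eval_Dq_eq_zero_of_mem hfl hv
    rw [eval_Dq_linPoly] at hres
    exact hlv hres
  -- tangent spaces equal T away from 0 (same finrank)
  have heqT : ∀ x ∈ C, x ≠ 0 → zTangent C x = T := by
    intro x hx hx0
    refine Submodule.eq_of_le_of_finrank_eq (hsub x hx) ?_
    rw [hsmooth x hx hx0, hT, hsmooth p hpC hp0]
  -- ideal of C is closed under Dq q for every q ∈ T
  have HT : ∀ q, q ∈ T → ∀ f : MvPolynomial (Fin (N + 1)) ℂ,
      (∀ y ∈ C, eval y f = 0) → ∀ y ∈ C, eval y (Dq q f) = 0 := by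
    intro q hq f hf
    refine vanish_at_zero hcone hx₀C hx₀0 ?_
    intro y hy hy0
    refine eval_Dq_eq_zero_of_mem hf ?_
    rw [heqT y hy hy0]
    exact hq
  -- hence T ⊆ C
  have hTC : ∀ q ∈ T, q ∈ C := by
    intro q hq
    have := translate_mem hCS (HT q hq) h0C 1
    simpa using this
  -- so C = T, a linear subspace: contradiction
  refine hdeg ⟨T, ?_⟩
  ext y
  exact ⟨fun hy => hCT y hy, fun hy => hTC y hy⟩
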